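/- arXiv:2205.15297 — 5 statements merged into one kernel-verified Lean document; each statement's English description precedes it below -/
import Mathlib

section
/- Let (R,m,k) be a Noetherian local ring and let N be an R-submodule of a finitely generated R-module M. Suppose Ext^1_R(k,N)^μ = 0, i.e., every short exact sequence 0 → N → X → k → 0 of finitely generated R-modules with μ(X) = μ(N) + 1 splits. Then (mN :_M m) = N + Soc(M), where Soc(M) = (0 :_M m); in particular, N + Soc(M) is a weakly m-full submodule of M, and if moreover depth M > 0, then (mN :_M m) = N, i.e., N itself is a weakly m-full submodule of M. -/
open IsLocalRing

/-- The minimal number of generators `μ(M) = dim_k (M/𝔪M)` of a module over a local ring. -/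
noncomputable def mu (R : Type) [CommRing R] [IsLocalRing R]
    (M : Type) [AddCommGroup M] [Module R M] : ℕ :=
  Module.finrank (R ⧸ maximalIdeal R)
    (M ⧸ (maximalIdeal R • ⊤ : Submodule R M))

lemma finrank_eq_of_exact (R : Type) [CommRing R] [IsLocalRing R]
    (A B : Type) [AddCommGroup A] [Module (R ⧸ maximalIdeal R) A]
    [AddCommGroup B] [Module (R ⧸ maximalIdeal R) B]
    [Module.Finite (R ⧸ maximalIdeal R) A]
    (fk : B →ₗ[R ⧸ maximalIdeal R] A) (gk : A →ₗ[R ⧸ maximalIdeal R] (R ⧸ maximalIdeal R))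
    (hinj : Function.Injective fk) (hsurj : Function.Surjective gk)
    (hker : LinearMap.ker gk = LinearMap.range fk) :
    Module.finrank (R ⧸ maximalIdeal R) A = Module.finrank (R ⧸ maximalIdeal R) B + 1 := by
  letI : Field (R ⧸ maximalIdeal R) := Ideal.Quotient.field (maximalIdeal R)
  haveI : FiniteDimensional (R ⧸ maximalIdeal R) A := ‹Module.Finite (R ⧸ maximalIdeal R) A›
  have hrank := LinearMap.finrank_range_add_finrank_ker gk
  have h1 : Module.finrank (R ⧸ maximalIdeal R) ↥(LinearMap.range gk) = 1 := by
    rw [LinearMap.range_eq_top.2 hsurj, finrank_top, Module.finrank_self]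
  have h2 : Module.finrank (R ⧸ maximalIdeal R) ↥(LinearMap.ker gk)
      = Module.finrank (R ⧸ maximalIdeal R) B := by
    rw [hker, LinearMap.finrank_range_of_inj hinj]
  rw [h1, h2] at hrank
  omega

set_option maxHeartbeats 2000000 in
lemma key_mem (R : Type) [CommRing R] [IsLocalRing R] [IsNoetherianRing R]
    (M : Type) [AddCommGroup M] [Module R M] [Module.Finite R M]
    (N : Submodule R M)
    (hvan : ∀ (X : Type) [AddCommGroup X] [Module R X] [Module.Finite R X]
      (f : ↥N →ₗ[R] X) (g : X →ₗ[R] R ⧸ maximalIdeal R),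
      Function.Injective f → Function.Surjective g → Function.Exact f g →
      mu R X = mu R ↥N + 1 →
      ∃ s : (R ⧸ maximalIdeal R) →ₗ[R] X, g ∘ₗ s = LinearMap.id)
    (z : M) (hz : ∀ r ∈ maximalIdeal R, r • z ∈ (maximalIdeal R • N : Submodule R M)) :
    z ∈ N ⊔ Submodule.torsionBySet R M ↑(maximalIdeal R) := by
  classical
  by_cases hzN : z ∈ N
  · exact Submodule.mem_sup_left hzN
  haveI : (maximalIdeal R).IsMaximal := IsLocalRing.maximalIdeal.isMaximal R
  set X : Submodule R M := N ⊔ Submodule.span R {z} with hXdef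
  have hNX : N ≤ X := le_sup_left
  have hzX : z ∈ X := Submodule.mem_sup_right (Submodule.mem_span_singleton_self z)
  have hIX : (maximalIdeal R) • X ≤ (maximalIdeal R) • N := by
    rw [hXdef, Submodule.smul_sup]
    refine sup_le le_rfl (Submodule.smul_le.2 ?_)
    intro r hr x hx
    obtain ⟨c, rfl⟩ := Submodule.mem_span_singleton.1 hx
    rw [smul_comm]
    exact Submodule.smul_mem _ c (hz r hr)
  have hINN : (maximalIdeal R) • N ≤ N := Submodule.smul_le_right
  have hrzN : ∀ r ∈ (maximalIdeal R), r • z ∈ N := fun r hr => hINN (hz r hr)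
  set N' : Submodule R ↥X := N.comap X.subtype with hN'
  set f : ↥N →ₗ[R] ↥X := Submodule.inclusion hNX with hf
  have finj : Function.Injective f := Submodule.inclusion_injective hNX
  -- build g
  set φ : R →ₗ[R] ↥X := LinearMap.toSpanSingleton R ↥X ⟨z, hzX⟩ with hφ
  set ψ : R →ₗ[R] ↥X ⧸ N' := N'.mkQ ∘ₗ φ with hψ
  have hIker : (maximalIdeal R) ≤ LinearMap.ker ψ := by
    intro r hr
    simp only [LinearMap.mem_ker, hψ, LinearMap.comp_apply, hφ,
      LinearMap.toSpanSingleton_apply]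
    rw [Submodule.mkQ_apply, Submodule.Quotient.mk_eq_zero]
    exact hrzN r hr
  set ψq : (R ⧸ maximalIdeal R) →ₗ[R] (↥X ⧸ N') := Submodule.liftQ (maximalIdeal R) ψ hIker with hψq
  have hsurjψq : Function.Surjective ψq := by
    intro a
    obtain ⟨x, rfl⟩ := Submodule.mkQ_surjective N' a
    obtain ⟨n, hn, y, hy, hsum⟩ := Submodule.mem_sup.1 (show (x:M) ∈ N ⊔ Submodule.span R {z} from x.2)
    obtain ⟨c, rfl⟩ := Submodule.mem_span_singleton.1 hy
    refine ⟨Ideal.Quotient.mk (maximalIdeal R) c, ?_⟩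
    rw [hψq]
    show ψ c = Submodule.mkQ N' x
    simp only [hψ, LinearMap.comp_apply, hφ, LinearMap.toSpanSingleton_apply,
      Submodule.mkQ_apply]
    refine (Submodule.Quotient.eq N').2 ?_
    show ((c • (⟨z, hzX⟩ : ↥X) - x : ↥X) : M) ∈ N
    have : ((c • (⟨z, hzX⟩ : ↥X) - x : ↥X) : M) = c • z - x := by simp
    rw [this, ← hsum]
    simpa using N.neg_mem hn
  have hinjψq : Function.Injective ψq := by
    refine (injective_iff_map_eq_zero ψq).2 ?_
    intro a ha
    obtain ⟨r, rfl⟩ := Ideal.Quotient.mk_surjective a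
    have h0 : ψ r = 0 := by rw [hψq] at ha; exact ha
    have hmem : r • z ∈ N := by
      have : (r • (⟨z, hzX⟩ : ↥X)) ∈ N' := by
        have := h0
        simp only [hψ, LinearMap.comp_apply, hφ, LinearMap.toSpanSingleton_apply,
          Submodule.mkQ_apply, Submodule.Quotient.mk_eq_zero] at this
        exact this
      simpa [hN', Submodule.mem_comap] using this
    have hrI : r ∈ (maximalIdeal R) := by
      by_contra hrnot
      have hu : IsUnit r := by
        simpa [IsLocalRing.mem_maximalIdeal, mem_nonunits_iff, not_not] using hrnot
      obtain ⟨u, rfl⟩ := hu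
      refine hzN ?_
      have h2 := N.smul_mem (↑u⁻¹ : R) hmem
      rwa [smul_smul, Units.inv_mul, one_smul] at h2
    rwa [Ideal.Quotient.eq_zero_iff_mem]
  set e : (R ⧸ maximalIdeal R) ≃ₗ[R] (↥X ⧸ N') :=
    LinearEquiv.ofBijective ψq ⟨hinjψq, hsurjψq⟩ with he
  set g : ↥X →ₗ[R] R ⧸ maximalIdeal R := e.symm.toLinearMap ∘ₗ N'.mkQ with hg
  have hgsurj : Function.Surjective g :=
    e.symm.surjective.comp (Submodule.mkQ_surjective N')
  have hkerg : LinearMap.ker g = N' := by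
    ext x
    simp only [hg, LinearMap.mem_ker, LinearMap.comp_apply, LinearEquiv.coe_coe,
      LinearEquiv.map_eq_zero_iff, Submodule.mkQ_apply, Submodule.Quotient.mk_eq_zero]
  have hexact : Function.Exact f g := by
    rw [LinearMap.exact_iff, hkerg, hf, Submodule.range_inclusion]
  -- mu computation
  have halg : ∀ r ∈ (maximalIdeal R), (algebraMap R (R ⧸ maximalIdeal R)) r = 0 := by
    intro r hr
    rw [Ideal.Quotient.algebraMap_eq, Ideal.Quotient.eq_zero_iff_mem]
    exact hr
  have hsmul0 : ∀ r ∈ (maximalIdeal R), ∀ c : R ⧸ maximalIdeal R, r • c = 0 := by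
    intro r hr c
    rw [← algebraMap_smul (R ⧸ maximalIdeal R) r c, halg r hr, zero_smul]
  have hIA : ((maximalIdeal R) • ⊤ : Submodule R ↥X) ≤ LinearMap.ker g := by
    refine Submodule.smul_le.2 ?_
    intro r hr x _
    rw [LinearMap.mem_ker, map_smul, hsmul0 r hr]
  set g₁ : (↥X ⧸ ((maximalIdeal R) • ⊤ : Submodule R ↥X)) →ₗ[R] (R ⧸ maximalIdeal R) :=
    Submodule.liftQ _ g hIA with hg₁
  have hmksurj : Function.Surjective ⇑(algebraMap R (R ⧸ maximalIdeal R)) := by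
    rw [Ideal.Quotient.algebraMap_eq]
    exact Ideal.Quotient.mk_surjective
  set gk : (↥X ⧸ ((maximalIdeal R) • ⊤ : Submodule R ↥X)) →ₗ[R ⧸ maximalIdeal R] (R ⧸ maximalIdeal R) :=
    g₁.extendScalarsOfSurjective hmksurj with hgk
  have hgk_apply : ∀ x : ↥X, gk (Submodule.Quotient.mk x) = g x := fun x => rfl
  have hfcomap : ((maximalIdeal R) • ⊤ : Submodule R ↥N) ≤
      Submodule.comap f ((maximalIdeal R) • ⊤ : Submodule R ↥X) := by
    refine Submodule.smul_le.2 ?_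
    intro r hr n _
    rw [Submodule.mem_comap, map_smul]
    exact Submodule.smul_mem_smul hr (Submodule.mem_top)
  set fbar : (↥N ⧸ ((maximalIdeal R) • ⊤ : Submodule R ↥N)) →ₗ[R] (↥X ⧸ ((maximalIdeal R) • ⊤ : Submodule R ↥X)) :=
    Submodule.mapQ _ _ f hfcomap with hfbar
  set fk : (↥N ⧸ ((maximalIdeal R) • ⊤ : Submodule R ↥N)) →ₗ[R ⧸ maximalIdeal R]
      (↥X ⧸ ((maximalIdeal R) • ⊤ : Submodule R ↥X)) :=
    fbar.extendScalarsOfSurjective hmksurj with hfk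
  have hfk_apply : ∀ n : ↥N,
      fk (Submodule.Quotient.mk n) = Submodule.Quotient.mk (f n) := fun n => rfl
  have hmapN : Submodule.map N.subtype ((maximalIdeal R) • (⊤ : Submodule R ↥N)) = (maximalIdeal R) • N := by
    rw [Submodule.map_smul'', Submodule.map_subtype_top]
  have hmapX : Submodule.map X.subtype ((maximalIdeal R) • (⊤ : Submodule R ↥X)) = (maximalIdeal R) • X := by
    rw [Submodule.map_smul'', Submodule.map_subtype_top]
  have hfkinj : Function.Injective fk := by
    refine (injective_iff_map_eq_zero fk).2 ?_
    intro b hb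
    obtain ⟨n, rfl⟩ := Submodule.mkQ_surjective _ b
    rw [Submodule.mkQ_apply, hfk_apply, Submodule.Quotient.mk_eq_zero] at hb
    have hval : (n : M) ∈ (maximalIdeal R) • X := by
      rw [← hmapX]
      exact ⟨f n, hb, rfl⟩
    have hvalN : (n : M) ∈ (maximalIdeal R) • N := hIX hval
    rw [← hmapN] at hvalN
    obtain ⟨n', hn', hn'eq⟩ := hvalN
    have : n' = n := Subtype.ext hn'eq
    rw [Submodule.mkQ_apply, Submodule.Quotient.mk_eq_zero]
    exact this ▸ hn'
  have hgksurj : Function.Surjective gk := by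
    intro c
    obtain ⟨x, rfl⟩ := hgsurj c
    exact ⟨Submodule.Quotient.mk x, hgk_apply x⟩
  have hker_range : LinearMap.ker gk = LinearMap.range fk := by
    ext a
    constructor
    · intro ha
      obtain ⟨x, rfl⟩ := Submodule.mkQ_surjective _ a
      rw [LinearMap.mem_ker, Submodule.mkQ_apply, hgk_apply] at ha
      have hxN : x ∈ N' := hkerg ▸ ha
      refine ⟨Submodule.Quotient.mk ⟨(x : M), hxN⟩, ?_⟩
      rw [hfk_apply]
      congr 1
    · rintro ⟨b, rfl⟩
      obtain ⟨n, rfl⟩ := Submodule.mkQ_surjective _ b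
      rw [LinearMap.mem_ker, Submodule.mkQ_apply, hfk_apply, hgk_apply]
      have : f n ∈ LinearMap.ker g := by
        rw [hkerg]
        exact n.2
      exact this
  haveI : Module.Finite R ↥X := inferInstance
  haveI : Module.Finite R (↥X ⧸ ((maximalIdeal R) • ⊤ : Submodule R ↥X)) := inferInstance
  haveI : Module.Finite R (↥N ⧸ ((maximalIdeal R) • ⊤ : Submodule R ↥N)) := inferInstance
  haveI : Module.Finite (R ⧸ maximalIdeal R) (↥X ⧸ ((maximalIdeal R) • ⊤ : Submodule R ↥X)) :=
    Module.Finite.of_restrictScalars_finite R _ _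
  haveI : Module.Finite (R ⧸ maximalIdeal R) (↥N ⧸ ((maximalIdeal R) • ⊤ : Submodule R ↥N)) :=
    Module.Finite.of_restrictScalars_finite R _ _
  have hmu : mu R ↥X = mu R ↥N + 1 := by
    have h := finrank_eq_of_exact R _ _ fk gk hfkinj hgksurj hker_range
    exact h
  obtain ⟨s, hs⟩ := hvan ↥X f g finj hgsurj hexact hmu
  set w : ↥X := s 1 with hw
  have hwt : ∀ r ∈ (maximalIdeal R), r • (w : M) = 0 := by
    intro r hr
    have : r • w = 0 := by
      rw [hw, ← map_smul, hsmul0 r hr, map_zero]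
    calc r • (w : M) = ((r • w : ↥X) : M) := rfl
      _ = 0 := by rw [this]; rfl
  have hwtors : (w : M) ∈ Submodule.torsionBySet R M ↑(maximalIdeal R) := by
    rw [Submodule.mem_torsionBySet_iff]
    rintro ⟨r, hr⟩
    exact hwt r hr
  obtain ⟨r, hr⟩ := Ideal.Quotient.mk_surjective (g ⟨z, hzX⟩)
  have hgsw : g (s 1) = 1 := by
    have := congrArg (fun t => t (1 : R ⧸ maximalIdeal R)) hs
    simpa using this
  have hx : (⟨z, hzX⟩ - r • w : ↥X) ∈ LinearMap.ker g := by
    rw [LinearMap.mem_ker, map_sub, map_smul, hw, hgsw]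
    have : r • (1 : R ⧸ maximalIdeal R) = Ideal.Quotient.mk (maximalIdeal R) r := by
      rw [← algebraMap_smul (R ⧸ maximalIdeal R) r (1 : R ⧸ maximalIdeal R),
        smul_eq_mul, mul_one, Ideal.Quotient.algebraMap_eq]
    rw [this, hr, sub_self]
  rw [hkerg] at hx
  have hxN : ((⟨z, hzX⟩ - r • w : ↥X) : M) ∈ N := hx
  have hzeq : z = ((⟨z, hzX⟩ - r • w : ↥X) : M) + r • (w : M) := by
    simp
  rw [hzeq]
  exact Submodule.add_mem_sup hxN (Submodule.smul_mem _ r hwtors)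

/-- Let `(R,𝔪,k)` be a Noetherian local ring and `N ⊆ M` a submodule of a finitely generated
module, such that `Ext¹_R(k,N)^μ = 0`, i.e. every short exact sequence `0 → N → X → k → 0`
of finitely generated modules with `μ(X) = μ(N) + 1` splits.  Then
`(𝔪N :_M 𝔪) = N + Soc(M)`; in particular `N + Soc(M)` is a weakly `𝔪`-full submodule of
`M`, and if `depth M > 0` then `(𝔪N :_M 𝔪) = N`. -/
theorem stmt7 (R : Type) [CommRing R] [IsLocalRing R] [IsNoetherianRing R]
    (M : Type) [AddCommGroup M] [Module R M] [Module.Finite R M]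
    (N : Submodule R M)
    (hvan : ∀ (X : Type) [AddCommGroup X] [Module R X] [Module.Finite R X]
      (f : ↥N →ₗ[R] X) (g : X →ₗ[R] R ⧸ maximalIdeal R),
      Function.Injective f → Function.Surjective g → Function.Exact f g →
      mu R X = mu R ↥N + 1 →
      ∃ s : (R ⧸ maximalIdeal R) →ₗ[R] X, g ∘ₗ s = LinearMap.id) :
    (∀ z : M, (∀ r ∈ maximalIdeal R, r • z ∈ (maximalIdeal R • N : Submodule R M)) ↔
      z ∈ N ⊔ Submodule.torsionBySet R M ↑(maximalIdeal R)) ∧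
    (∀ z : M, (∀ r ∈ maximalIdeal R,
        r • z ∈ (maximalIdeal R •
          (N ⊔ Submodule.torsionBySet R M ↑(maximalIdeal R)) : Submodule R M)) ↔
      z ∈ N ⊔ Submodule.torsionBySet R M ↑(maximalIdeal R)) ∧
    ((∃ y ∈ maximalIdeal R, IsSMulRegular M y) →
      ∀ z : M, (∀ r ∈ maximalIdeal R, r • z ∈ (maximalIdeal R • N : Submodule R M)) ↔
        z ∈ N) := by
  have main : ∀ z : M, (∀ r ∈ maximalIdeal R,
      r • z ∈ (maximalIdeal R • N : Submodule R M)) ↔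
      z ∈ N ⊔ Submodule.torsionBySet R M ↑(maximalIdeal R) := by
    intro z
    constructor
    · exact key_mem R M N hvan z
    · intro hzmem r hr
      obtain ⟨n, hn, t, ht, rfl⟩ := Submodule.mem_sup.1 hzmem
      have ht0 : r • t = 0 := (Submodule.mem_torsionBySet_iff _ _).1 ht ⟨r, hr⟩
      rw [smul_add, ht0, add_zero]
      exact Submodule.smul_mem_smul hr hn
  refine ⟨main, ?_, ?_⟩
  · intro z
    constructor
    · intro h
      refine (main z).1 (fun r hr => ?_)
      have hle : maximalIdeal R • (N ⊔ Submodule.torsionBySet R M ↑(maximalIdeal R))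
          ≤ maximalIdeal R • N := by
        rw [Submodule.smul_sup]
        refine sup_le le_rfl (Submodule.smul_le.2 ?_)
        intro a ha t ht
        have ht0 : a • t = 0 := (Submodule.mem_torsionBySet_iff _ _).1 ht ⟨a, ha⟩
        rw [ht0]
        exact Submodule.zero_mem _
      exact hle (h r hr)
    · intro hmem r hr
      exact Submodule.smul_mem_smul hr hmem
  · rintro ⟨y, hy, hreg⟩ z
    constructor
    · intro h
      have hmem := (main z).1 h
      have hT : Submodule.torsionBySet R M ↑(maximalIdeal R) = ⊥ := by
        rw [eq_bot_iff]
        intro t ht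
        have ht0 : y • t = 0 := (Submodule.mem_torsionBySet_iff _ _).1 ht ⟨y, hy⟩
        have : t = 0 := hreg (show y • t = y • 0 by rw [ht0, smul_zero])
        simpa using this
      rwa [hT, sup_bot_eq] at hmem
    · intro hz r hr
      exact Submodule.smul_mem_smul hr hz
end

section
/- Let (R,m) be a Noetherian local ring and I an ideal of R that is not principal. Then for every x ∈ I \ mI, one has (xm :_R I) = ((x) :_R I); equivalently, every y ∈ R with yI ⊆ xR satisfies y ∈ m and yI ⊆ xm. -/
open IsLocalRing

/-- Let `(R,𝔪)` be a Noetherian local ring and `I` a non-principal ideal.  Then for every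
`x ∈ I \ 𝔪I` one has `(x𝔪 :_R I) = ((x) :_R I)`: every `y ∈ R` with `yI ⊆ xR` satisfies
`y ∈ 𝔪` and `yI ⊆ x𝔪`. -/
theorem stmt8 (R : Type) [CommRing R] [IsLocalRing R] [IsNoetherianRing R]
    (I : Ideal R) (hnp : ¬ ∃ a : R, I = Ideal.span {a})
    (x : R) (hxI : x ∈ I) (hx : x ∉ maximalIdeal R * I) :
    ∀ y : R, (∀ i ∈ I, y * i ∈ Ideal.span {x}) →
      y ∈ maximalIdeal R ∧ ∀ i ∈ I, y * i ∈ Ideal.span {x} * maximalIdeal R := by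
  intro y hy
  have hym : y ∈ maximalIdeal R := by
    by_contra hyu
    rw [mem_maximalIdeal, mem_nonunits_iff, not_not] at hyu
    apply hnp
    refine ⟨x, le_antisymm ?_ ?_⟩
    · intro i hi
      have h := hy i hi
      have : i = hyu.unit⁻¹ * (y * i) := by
        rw [← mul_assoc]
        simp [IsUnit.val_inv_mul]
      rw [this]
      exact Ideal.mul_mem_left _ _ h
    · rw [Ideal.span_le, Set.singleton_subset_iff]; exact hxI
  refine ⟨hym, fun i hi => ?_⟩
  obtain ⟨c, hc⟩ := Ideal.mem_span_singleton'.mp (hy i hi)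
  by_cases hcu : IsUnit c
  · exfalso
    apply hx
    have : x = hcu.unit⁻¹ * (y * i) := by
      rw [← hc, ← mul_assoc]
      simp [IsUnit.val_inv_mul]
    rw [this]
    exact Ideal.mul_mem_left _ _ (Ideal.mul_mem_mul hym hi)
  · have hcm : c ∈ maximalIdeal R := hcu
    rw [← hc, mul_comm c x]
    exact Ideal.mul_mem_mul (Ideal.mem_span_singleton_self x) hcm
end

section
/- Let (R,m) be a 1-dimensional Cohen–Macaulay Noetherian local ring and let x ∈ m be an R-regular element. Let a, b > 0 be integers, let F_1, F_2 be finitely generated free R-modules with rank F_2 ≤ rank F_1, and let σ : 0 → F_1 → F_2 ⊕ R/x^aR → R/x^bR → 0 be a short exact sequence of R-modules. If c ≥ b is an integer such that the sequence σ ⊗_R R/x^cR is again short exact, then a = b, rank F_1 = rank F_2, and σ is split exact. -/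
open IsLocalRing

/-- `depth ≥ n`: there is an `M`-regular sequence of length `n` inside the maximal ideal. -/
def depthGE (R : Type) [CommRing R] [IsLocalRing R]
    (M : Type) [AddCommGroup M] [Module R M] (n : ℕ) : Prop :=
  ∃ rs : List R, rs.length = n ∧ (∀ r ∈ rs, r ∈ maximalIdeal R) ∧
    RingTheory.Sequence.IsRegular M rs

/-- `y ^ n` kills `R ⧸ (y ^ m)` whenever `m ≤ n`. -/
lemma kill_quot {R : Type} [CommRing R] (y : R) {m n : ℕ} (h : m ≤ n)
    (z : R ⧸ Ideal.span {y ^ m}) : y ^ n • z = 0 := by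
  obtain ⟨r, rfl⟩ := Submodule.Quotient.mk_surjective _ z
  rw [← Submodule.Quotient.mk_smul, Submodule.Quotient.mk_eq_zero]
  exact Ideal.mem_span_singleton.2 (dvd_mul_of_dvd_left (pow_dvd_pow y h) r)

/-- Extract a witness from membership in `span {z} • ⊤`. -/
lemma mem_span_smul_top {R M : Type} [CommRing R] [AddCommGroup M] [Module R M] (z : R)
    {v : M} (h : v ∈ Ideal.span {z} • (⊤ : Submodule R M)) : ∃ w, v = z • w := by
  refine Submodule.smul_induction_on h ?_ ?_
  · intro r hr n _
    obtain ⟨s, rfl⟩ := Ideal.mem_span_singleton'.1 hr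
    exact ⟨s • n, by rw [mul_comm, mul_smul]⟩
  · rintro m n ⟨w1, rfl⟩ ⟨w2, rfl⟩
    exact ⟨w1 + w2, (smul_add z w1 w2).symm⟩

/-- Let `(R,𝔪)` be a `1`-dimensional Cohen–Macaulay Noetherian local ring, `x ∈ 𝔪`
`R`-regular, `a, b > 0`, `F₁ = R^p`, `F₂ = R^q` free with `q ≤ p`, and
`σ : 0 → F₁ → F₂ ⊕ R/x^aR → R/x^bR → 0` a short exact sequence.  If `c ≥ b` is such that
`σ ⊗ R/x^cR` is again short exact (i.e. the leftmost map stays injective modulo `x^c`),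
then `a = b`, `p = q`, and `σ` is split exact. -/
theorem stmt10 (R : Type) [CommRing R] [IsLocalRing R] [IsNoetherianRing R]
    (hdim : ringKrullDim R = 1) (hCM : depthGE R R 1)
    (x : R) (hx : x ∈ maximalIdeal R) (hxreg : IsSMulRegular R x)
    (a b : ℕ) (ha : 0 < a) (hb : 0 < b)
    (p q : ℕ) (hpq : q ≤ p)
    (f : (Fin p → R) →ₗ[R] ((Fin q → R) × (R ⧸ Ideal.span {x ^ a})))
    (g : ((Fin q → R) × (R ⧸ Ideal.span {x ^ a})) →ₗ[R] R ⧸ Ideal.span {x ^ b})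
    (hinj : Function.Injective f) (hsurj : Function.Surjective g)
    (hexact : Function.Exact f g)
    (c : ℕ) (hc : b ≤ c)
    (htensor : ∀ v : Fin p → R,
      f v ∈ (Ideal.span {x ^ c} •
        (⊤ : Submodule R ((Fin q → R) × (R ⧸ Ideal.span {x ^ a})))) →
      v ∈ (Ideal.span {x ^ c} • (⊤ : Submodule R (Fin p → R)))) :
    a = b ∧ p = q ∧
      ∃ s : (R ⧸ Ideal.span {x ^ b}) →ₗ[R] ((Fin q → R) × (R ⧸ Ideal.span {x ^ a})),
        g ∘ₗ s = LinearMap.id := by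
  classical
  have hxc : ∀ k : ℕ, IsSMulRegular R (x ^ k) := fun k => hxreg.pow k
  -- regularity of x^k on function spaces, pointwise
  have hreg : ∀ (k n : ℕ) (u w : Fin n → R), x ^ k • u = x ^ k • w → u = w := by
    intro k n u w h
    funext i
    have := congrFun h i
    simpa using hxc k this
  set ψ : (Fin p → R) →ₗ[R] (Fin q → R) := (LinearMap.fst R _ _) ∘ₗ f with hψdef
  have hψ : ∀ v, ψ v = (f v).1 := fun v => rfl
  -- key0 : if the first component of `f v` vanishes then `v = 0`
  have key0 : ∀ v : Fin p → R, (f v).1 = 0 → v = 0 := by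
    intro v hv
    have h1 : f (x ^ a • v) = 0 := by
      rw [map_smul]
      have : x ^ a • f v = (x ^ a • (f v).1, x ^ a • (f v).2) := rfl
      rw [this, hv, smul_zero, kill_quot x le_rfl]
      rfl
    have h2 : x ^ a • v = 0 := hinj (by simpa using h1)
    have h3 : x ^ a • v = x ^ a • (0 : Fin p → R) := by rw [h2, smul_zero]
    exact hreg a p v 0 h3
  have hψinj : Function.Injective ψ := by
    intro u v h
    have : ψ (u - v) = 0 := by rw [map_sub, h, sub_self]
    have := key0 (u - v) this
    exact sub_eq_zero.mp this
  -- surjectivity of ψ, using htensor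
  have hψsurj : Function.Surjective ψ := by
    intro w
    -- (x^c • w, 0) is in the kernel of g since x^c kills R/x^b
    have hker : g (x ^ c • w, (0 : R ⧸ Ideal.span {x ^ a})) = 0 := by
      have h1 : ((x ^ c • w, (0 : R ⧸ Ideal.span {x ^ a}))
          : (Fin q → R) × (R ⧸ Ideal.span {x ^ a})) = x ^ c • (w, 0) := by
        simp
      rw [h1, map_smul, kill_quot x hc]
    obtain ⟨v, hv⟩ := (hexact _).1 hker
    have hmem : f v ∈ Ideal.span {x ^ c} •
        (⊤ : Submodule R ((Fin q → R) × (R ⧸ Ideal.span {x ^ a}))) := by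
      rw [hv]
      have h1 : ((x ^ c • w, (0 : R ⧸ Ideal.span {x ^ a}))
          : (Fin q → R) × (R ⧸ Ideal.span {x ^ a})) = x ^ c • (w, 0) := by
        simp
      rw [h1]
      exact Submodule.smul_mem_smul (Ideal.mem_span_singleton_self _) trivial
    obtain ⟨v', hv'⟩ := mem_span_smul_top (x ^ c) (htensor v hmem)
    refine ⟨v', ?_⟩
    -- x^c • (f v').1 = x^c • w
    have h3 : x ^ c • f v' = (x ^ c • w, (0 : R ⧸ Ideal.span {x ^ a})) := by
      rw [← map_smul, ← hv', hv]
    have h4 : x ^ c • (f v').1 = x ^ c • w := congrArg Prod.fst h3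
    exact (hψ v').trans (hreg c q _ _ h4)
  -- p = q
  have hpq' : p = q := by
    have e : (Fin p → R) ≃ₗ[R] (Fin q → R) :=
      LinearEquiv.ofBijective ψ ⟨hψinj, hψsurj⟩
    have := e.finrank_eq
    rwa [Module.finrank_fin_fun, Module.finrank_fin_fun] at this
  -- the map φ : R/x^a → R/x^b induced by g on the second factor
  set φ : (R ⧸ Ideal.span {x ^ a}) →ₗ[R] (R ⧸ Ideal.span {x ^ b}) :=
    g ∘ₗ LinearMap.inr R (Fin q → R) (R ⧸ Ideal.span {x ^ a}) with hφdef
  have hφ : ∀ t, φ t = g (0, t) := fun t => rfl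
  have hφinj : Function.Injective φ := by
    intro t t' h
    have h0 : φ (t - t') = 0 := by rw [map_sub, h, sub_self]
    have h1 : g (0, t - t') = 0 := h0
    obtain ⟨v, hv⟩ := (hexact _).1 h1
    have h2 : (f v).1 = 0 := congrArg Prod.fst hv
    have h3 : v = 0 := key0 v h2
    have h4 : ((0 : Fin q → R), t - t') = 0 := by rw [← hv, h3, map_zero]
    have h5 : t - t' = 0 := congrArg Prod.snd h4
    exact sub_eq_zero.mp h5
  have hφsurj : Function.Surjective φ := by
    intro z
    obtain ⟨⟨w, t⟩, hz⟩ := hsurj z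
    obtain ⟨v, hv⟩ := hψsurj w
    refine ⟨t - (f v).2, ?_⟩
    have hgf : g (f v) = 0 := (hexact (f v)).2 ⟨v, rfl⟩
    have h1 : ((0 : Fin q → R), t - (f v).2) = (w, t) - f v := by
      have : (f v).1 = w := (hψ v).symm.trans hv
      rw [Prod.mk_sub_mk, this, sub_self]
    rw [hφ, h1, map_sub, hgf, sub_zero, hz]
  -- a = b
  have hab : a = b := by
    -- x^b ∈ (x^a)
    have h1 : (x : R) ^ b ∈ Ideal.span {x ^ a} := by
      have h0 : φ (x ^ b • Submodule.Quotient.mk 1) = 0 := by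
        rw [map_smul, kill_quot x le_rfl]
      have h0' : x ^ b • (Submodule.Quotient.mk 1 : R ⧸ Ideal.span {x ^ a}) = 0 :=
        hφinj (by rw [h0, map_zero])
      rw [← Submodule.Quotient.mk_smul, Submodule.Quotient.mk_eq_zero] at h0'
      simpa using h0'
    -- x^a ∈ (x^b)
    have h2 : (x : R) ^ a ∈ Ideal.span {x ^ b} := by
      obtain ⟨t, ht⟩ := hφsurj (Submodule.Quotient.mk 1)
      have h0 : x ^ a • (Submodule.Quotient.mk 1 : R ⧸ Ideal.span {x ^ b}) = 0 := by
        rw [← ht, ← map_smul, kill_quot x le_rfl, map_zero]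
      rw [← Submodule.Quotient.mk_smul, Submodule.Quotient.mk_eq_zero] at h0
      simpa using h0
    have hxnotunit : ¬ IsUnit x := hx
    rcases lt_trichotomy a b with h | h | h
    · exfalso
      obtain ⟨r, hr⟩ := Ideal.mem_span_singleton.1 h2  -- x^a = x^b * r
      have hb' : x ^ b = x ^ a * x ^ (b - a) := by
        rw [← pow_add]
        congr 1
        omega
      have : x ^ a • (1 : R) = x ^ a • (x ^ (b - a) * r) := by
        rw [smul_eq_mul, smul_eq_mul, mul_one, ← mul_assoc, ← hb', hr]
      have h1' : (1 : R) = x ^ (b - a) * r := hxc a this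
      exact hxnotunit (isUnit_of_dvd_one ⟨x ^ (b - a - 1) * r, by
        rw [h1']; ring_nf; rw [← pow_succ']
        congr 2
        omega⟩)
    · exact h
    · exfalso
      obtain ⟨r, hr⟩ := Ideal.mem_span_singleton.1 h1  -- x^b = x^a * r
      have ha' : x ^ a = x ^ b * x ^ (a - b) := by
        rw [← pow_add]
        congr 1
        omega
      have : x ^ b • (1 : R) = x ^ b • (x ^ (a - b) * r) := by
        rw [smul_eq_mul, smul_eq_mul, mul_one, ← mul_assoc, ← ha', hr]
      have h1' : (1 : R) = x ^ (a - b) * r := hxc b this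
      exact hxnotunit (isUnit_of_dvd_one ⟨x ^ (a - b - 1) * r, by
        rw [h1']; ring_nf; rw [← pow_succ']
        congr 2
        omega⟩)
  subst hab
  refine ⟨rfl, hpq', ?_⟩
  set e : (R ⧸ Ideal.span {x ^ a}) ≃ₗ[R] (R ⧸ Ideal.span {x ^ a}) :=
    LinearEquiv.ofBijective φ ⟨hφinj, hφsurj⟩ with hedef
  refine ⟨(LinearMap.inr R (Fin q → R) (R ⧸ Ideal.span {x ^ a})) ∘ₗ
    (e.symm : _ →ₗ[R] _), ?_⟩
  apply LinearMap.ext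
  intro z
  simp only [LinearMap.coe_comp, Function.comp_apply, LinearMap.coe_inr, LinearMap.id_coe, id_eq]
  exact e.apply_symm_apply z
end

section
/- Let R be a commutative Noetherian ring and let I be an ideal of R containing a non-zero-divisor. Then there exist finitely many non-zero-divisors x_1, …, x_n ∈ R such that I = (x_1, …, x_n); that is, I is generated by non-zero-divisors. -/
/-!
Let `J` be the ideal spanned by the non-zero-divisors lying in `I`. Every element of `I` is
either such a non-zero-divisor, hence in `J`, or a zero divisor, hence in one of the finitely
many associated primes of `R`. So `I` is covered by `J` together with finitely many primes,
and prime avoidance (which tolerates one non-prime ideal in the cover) puts `I` inside `J` or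
inside an associated prime; the latter is impossible since `I` contains a non-zero-divisor.
Noetherianity then lets us pick finitely many of the spanning non-zero-divisors.
-/

open nonZeroDivisors

namespace Ideal

variable {R : Type*} [CommRing R] [IsNoetherianRing R] {I : Ideal R}

theorem span_inter_nonZeroDivisors_eq {x : R} (hxI : x ∈ I) (hx : x ∈ R⁰) :
    span ((I : Set R) ∩ R⁰) = I := by
  set J := span ((I : Set R) ∩ R⁰)
  refine le_antisymm (span_le.2 Set.inter_subset_left) ?_
  have hcover : (I : Set R) ⊆ ⋃ P ∈ insert J (associatedPrimes R R), (P : Set R) := by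
    intro z hz
    rw [Set.biUnion_insert, biUnion_associatedPrimes_eq_compl_nonZeroDivisors]
    by_cases hzR : z ∈ R⁰
    · exact Or.inl (subset_span ⟨hz, hzR⟩)
    · exact Or.inr hzR
  obtain ⟨P, hP, hIP⟩ := (subset_union_prime_finite ((associatedPrimes.finite R R).insert J)
    (f := id) J J fun P hP hPJ _ ↦ ((Set.mem_insert_iff.1 hP).resolve_left hPJ).isPrime).1 hcover
  rcases Set.mem_insert_iff.1 hP with rfl | hPass
  · exact hIP
  · have hxP : x ∈ ⋃ P ∈ associatedPrimes R R, (P : Set R) :=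
      Set.mem_biUnion hPass (hIP hxI)
    rw [biUnion_associatedPrimes_eq_compl_nonZeroDivisors] at hxP
    exact absurd hx hxP

theorem exists_finset_subset_nonZeroDivisors_span_eq {x : R} (hxI : x ∈ I) (hx : x ∈ R⁰) :
    ∃ s : Finset R, (s : Set R) ⊆ R⁰ ∧ I = span s := by
  obtain ⟨s, hsI, hs⟩ := (Submodule.fg_span_iff_fg_span_finset_subset ((I : Set R) ∩ R⁰)).1
    (IsNoetherian.noetherian (R := R) _)
  exact ⟨s, hsI.trans Set.inter_subset_right,
    (span_inter_nonZeroDivisors_eq hxI hx).symm.trans hs⟩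

end Ideal

/-- Let `R` be a commutative Noetherian ring and `I` an ideal containing a
non-zero-divisor.  Then `I` is generated by finitely many non-zero-divisors. -/
theorem stmt17 (R : Type) [CommRing R] [IsNoetherianRing R]
    (I : Ideal R) (hI : ∃ x ∈ I, ∀ r : R, r * x = 0 → r = 0) :
    ∃ (n : ℕ) (x : Fin n → R), (∀ i, ∀ r : R, r * x i = 0 → r = 0) ∧
      I = Ideal.span (Set.range x) := by
  obtain ⟨x, hxI, hx⟩ := hI
  obtain ⟨s, hsR, rfl⟩ :=
    Ideal.exists_finset_subset_nonZeroDivisors_span_eq hxI (mem_nonZeroDivisors_iff_right.2 hx)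
  refine ⟨s.card, (↑) ∘ s.equivFin.symm,
    fun i ↦ mem_nonZeroDivisors_iff_right.1 (hsR (s.equivFin.symm i).2), ?_⟩
  rw [Set.range_comp, Equiv.range_eq_univ, Set.image_univ, Subtype.range_coe]
end

section
/- Let (R,m) be a 1-dimensional Cohen–Macaulay Noetherian local ring, I an m-primary ideal of R, and x ∈ I an element with I^{n+1} = x I^n for some n ≥ 1 (a principal reduction of I). Then Im = xm if and only if Im ⊆ xR. (In the paper's terminology: the maximal ideal m is an I-Ulrich module if and only if m ⊆ ((x) : I).) -/
open IsLocalRing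

/-! If `I𝔪 ⊆ (x)` then every element of `I𝔪` is `r x` with `r ∈ 𝔪`, unless `x ∈ I𝔪`;
so the point is that `x ∉ I𝔪`. Otherwise the reduction equation gives
`I^{n+1} = x I^n ⊆ 𝔪 I^{n+1}`, whence `I^{n+1} = 0` by Nakayama; as `I` is `𝔪`-primary,
`𝔪` would be nilpotent, which a non-zero-divisor in `𝔪` forbids. -/

variable {R : Type*} [CommRing R]

theorem Ideal.pow_ne_bot_of_isSMulRegular [Nontrivial R] {J : Ideal R} {y : R} (hy : y ∈ J)
    (hreg : IsSMulRegular R y) (k : ℕ) : J ^ k ≠ ⊥ := by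
  intro hJ
  have hyk : y ^ k = 0 := by simpa [hJ] using Ideal.pow_mem_pow hy k
  have := hreg.pow k
  rw [hyk, IsSMulRegular.zero_iff_subsingleton] at this
  exact not_subsingleton R this

theorem Ideal.pow_ne_bot_of_pow_le {J I : Ideal R} {k : ℕ} (hk : J ^ k ≤ I)
    (hJ : ∀ m, J ^ m ≠ ⊥) (n : ℕ) : I ^ n ≠ ⊥ := by
  intro hI
  apply hJ (k * n)
  rw [pow_mul, ← le_bot_iff, ← hI]
  exact Ideal.pow_right_mono hk n

theorem Ideal.le_span_singleton_mul_maximalIdeal [IsLocalRing R] {J : Ideal R} {x : R}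
    (hJ : J ≤ Ideal.span {x}) (hx : x ∉ J) : J ≤ Ideal.span {x} * maximalIdeal R := by
  intro j hj
  obtain ⟨r, rfl⟩ := Ideal.mem_span_singleton'.mp (hJ hj)
  by_cases hr : IsUnit r
  · exact absurd ((Ideal.unit_mul_mem_iff_mem J hr).mp hj) hx
  · rw [mul_comm r x]
    exact Ideal.mul_mem_mul (Ideal.mem_span_singleton_self x) hr

theorem notMem_mul_maximalIdeal_of_reduction [IsLocalRing R] [IsNoetherianRing R]
    {I : Ideal R} {x : R} {n : ℕ} (hred : I ^ (n + 1) = Ideal.span {x} * I ^ n)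
    (hI : I ^ (n + 1) ≠ ⊥) : x ∉ I * maximalIdeal R := by
  intro hx
  refine hI (Submodule.eq_bot_of_le_smul_of_le_jacobson_bot (maximalIdeal R) _
    (IsNoetherian.noetherian _) ?_ (jacobson_eq_maximalIdeal ⊥ bot_ne_top).ge)
  calc I ^ (n + 1) = Ideal.span {x} * I ^ n := hred
    _ ≤ I * maximalIdeal R * I ^ n :=
      Ideal.mul_mono_left (Ideal.span_singleton_le_iff_mem _ |>.mpr hx)
    _ = maximalIdeal R • I ^ (n + 1) := by rw [smul_eq_mul]; ring

theorem stmt18_general (R : Type) [CommRing R] [IsLocalRing R] [IsNoetherianRing R]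
    (hCM : ∃ y ∈ maximalIdeal R, IsSMulRegular R y)
    (I : Ideal R) (hprim : ∃ k : ℕ, maximalIdeal R ^ k ≤ I)
    (x : R) (hx : x ∈ I)
    (hred : ∃ n : ℕ, 1 ≤ n ∧ I ^ (n + 1) = Ideal.span {x} * I ^ n) :
    I * maximalIdeal R = Ideal.span {x} * maximalIdeal R ↔
      I * maximalIdeal R ≤ Ideal.span {x} := by
  obtain ⟨n, -, hn⟩ := hred
  obtain ⟨k, hk⟩ := hprim
  obtain ⟨y, hym, hyreg⟩ := hCM
  have hxI : x ∉ I * maximalIdeal R := notMem_mul_maximalIdeal_of_reduction hn <|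
    Ideal.pow_ne_bot_of_pow_le hk (Ideal.pow_ne_bot_of_isSMulRegular hym hyreg) _
  refine ⟨fun h ↦ h ▸ Ideal.mul_le_left, fun h ↦ le_antisymm ?_ ?_⟩
  · exact Ideal.le_span_singleton_mul_maximalIdeal h hxI
  · exact Ideal.mul_mono_left (Ideal.span_singleton_le_iff_mem _ |>.mpr hx)

/-- Let `(R,𝔪)` be a `1`-dimensional Cohen–Macaulay Noetherian local ring, `I` an
`𝔪`-primary ideal and `x ∈ I` a principal reduction of `I` (`I^{n+1} = xI^n` for some
`n ≥ 1`).  Then `I𝔪 = x𝔪` iff `I𝔪 ⊆ xR`; that is, `𝔪` is an `I`-Ulrich module iff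
`𝔪 ⊆ ((x) : I)`. -/
theorem stmt18 (R : Type) [CommRing R] [IsLocalRing R] [IsNoetherianRing R]
    (hdim : ringKrullDim R = 1) (hCM : ∃ y ∈ maximalIdeal R, IsSMulRegular R y)
    (I : Ideal R) (hIle : I ≤ maximalIdeal R) (hprim : ∃ k : ℕ, maximalIdeal R ^ k ≤ I)
    (x : R) (hx : x ∈ I)
    (hred : ∃ n : ℕ, 1 ≤ n ∧ I ^ (n + 1) = Ideal.span {x} * I ^ n) :
    I * maximalIdeal R = Ideal.span {x} * maximalIdeal R ↔
      I * maximalIdeal R ≤ Ideal.span {x} :=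
  stmt18_general R hCM I hprim x hx hred
end
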